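/- arXiv:math/0605516 — 2 statements merged into one kernel-verified Lean document; each statement's English description precedes it below -/
import Mathlib

section
/- Every eigenvalue of the operator A⁽ⁿ⁾ = [[θ₂², −θ₂θ₁],[−θ₁θ₂, θ₁²]] on V⁽ⁿ⁾ ⊕ V⁽ⁿ⁾ is either 0 or of the form λ_k = −(1/2)(2kn − 2k² + n) for some k ∈ {0,…,n}. -/
/-- `θ₁ = (i/2)(X + Y)`. -/
noncomputable def theta1 {V : Type*} [AddCommGroup V] [Module ℂ V]
    (X Y : Module.End ℂ V) : Module.End ℂ V := (Complex.I / 2) • (X + Y)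

/-- `θ₂ = (1/2)(X − Y)`. -/
noncomputable def theta2 {V : Type*} [AddCommGroup V] [Module ℂ V]
    (X Y : Module.End ℂ V) : Module.End ℂ V := ((1 : ℂ) / 2) • (X - Y)

/-- Auxiliary: a product of shifted operators applied to an eigenvector. -/
lemma prod_eig {V : Type*} [AddCommGroup V] [Module ℂ V] (B : Module.End ℂ V)
    (l : List ℂ) (c : ℂ) (w : V) (hw : B w = c • w) :
    ((l.map (fun a => B - a • (1 : Module.End ℂ V))).prod) w
      = ((l.map (fun a => c - a)).prod) • w := by
  induction l with
  | nil => simp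
  | cons a t ih =>
    rw [List.map_cons, List.map_cons, List.prod_cons, List.prod_cons,
      Module.End.mul_apply, ih, LinearMap.sub_apply, map_smul, hw,
      LinearMap.smul_apply, Module.End.one_apply, smul_smul, smul_smul,
      ← sub_smul]
    congr 1
    ring

/-- every eigenvalue of
`A⁽ⁿ⁾ = [[θ₂², −θ₂θ₁],[−θ₁θ₂, θ₁²]]` on `V⁽ⁿ⁾ ⊕ V⁽ⁿ⁾` is either `0` or of the
form `λ_k = −(1/2)(2kn − 2k² + n)` for some `k ∈ {0,…,n}`.  Here `V⁽ⁿ⁾` is the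
irreducible `su(2)`-representation, described by the standard basis
`v₀,…,v_n` (spanning `V`, extended by zero outside `0 ≤ k ≤ n`). -/
theorem stmt12 {V : Type*} [AddCommGroup V] [Module ℂ V]
    (n : ℕ) (hn : 1 ≤ n)
    (X Y H : Module.End ℂ V)
    (hHX : ⁅H, X⁆ = (2 : ℂ) • X) (hHY : ⁅H, Y⁆ = (-2 : ℂ) • Y)
    (hXY : ⁅X, Y⁆ = H)
    (v : ℤ → V)
    (hv0 : ∀ k : ℤ, k < 0 ∨ (n : ℤ) < k → v k = 0)
    (hH : ∀ k : ℤ, H (v k) = ((n : ℂ) - 2 * k) • v k)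
    (hX : ∀ k : ℤ, X (v k) = ((k : ℂ) * ((n : ℂ) - k + 1)) • v (k - 1))
    (hY : ∀ k : ℤ, Y (v k) = v (k + 1))
    (hspan : Submodule.span ℂ (v '' Set.Icc (0 : ℤ) (n : ℤ)) = ⊤)
    (α β : V) (hne : ¬(α = 0 ∧ β = 0)) (lam : ℂ)
    (h1 : theta2 X Y (theta2 X Y α) - theta2 X Y (theta1 X Y β) = lam • α)
    (h2 : -theta1 X Y (theta2 X Y α) + theta1 X Y (theta1 X Y β) = lam • β) :
    lam = 0 ∨ ∃ k : ℤ, 0 ≤ k ∧ k ≤ (n : ℤ) ∧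
      lam = -(1 / 2 : ℂ) * (2 * (k : ℂ) * (n : ℂ) - 2 * (k : ℂ) ^ 2 + (n : ℂ)) := by
  classical
  set w : V := theta2 X Y α - theta1 X Y β with hw
  have hθ2w : theta2 X Y w = lam • α := by
    rw [hw, map_sub]; exact h1
  have hθ1w : theta1 X Y w = (-lam) • β := by
    rw [hw, map_sub, neg_smul, ← smul_neg]
    have : theta1 X Y (theta2 X Y α) - theta1 X Y (theta1 X Y β) = -(lam • β) := by
      rw [← h2]; abel
    rw [this]; simp
  by_cases hw0 : w = 0
  · left
    by_contra hl
    apply hne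
    constructor
    · have : lam • α = 0 := by rw [← hθ2w, hw0, map_zero]
      exact (smul_eq_zero.mp this).resolve_left hl
    · have : (-lam) • β = 0 := by rw [← hθ1w, hw0, map_zero]
      exact (smul_eq_zero.mp this).resolve_left (neg_ne_zero.mpr hl)
  · right
    set B : Module.End ℂ V := X * Y + Y * X with hB
    -- operator identity, pointwise
    have hBθ : ∀ x : V, B x = (-2 : ℂ) •
        (theta1 X Y (theta1 X Y x) + theta2 X Y (theta2 X Y x)) := by
      intro x
      simp only [hB, theta1, theta2, LinearMap.add_apply, LinearMap.sub_apply,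
        Module.End.mul_apply, LinearMap.smul_apply, map_add, map_sub, map_smul,
        smul_add, smul_sub, smul_smul]
      match_scalars <;> simp [div_mul_div_comm, Complex.I_mul_I] <;> ring
    have hBw : B w = (-2 * lam) • w := by
      rw [hBθ w, hθ1w, hθ2w, map_smul, map_smul, hw]
      module
    -- eigenvalues of B on the spanning vectors
    have hBv : ∀ k : ℤ, B (v k) =
        (2 * (k : ℂ) * (n : ℂ) - 2 * (k : ℂ) ^ 2 + (n : ℂ)) • v k := by
      intro k
      have h1' : X (v (k + 1)) = (((k : ℂ) + 1) * ((n : ℂ) - k)) • v k := by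
        rw [hX (k + 1)]
        have : k + 1 - 1 = k := by ring
        rw [this]
        congr 1
        push_cast
        ring
      have h2' : Y (v (k - 1)) = v k := by
        rw [hY (k - 1)]
        congr 1
        ring
      rw [hB, LinearMap.add_apply, Module.End.mul_apply, Module.End.mul_apply,
        hY k, h1', hX k, map_smul, h2', ← add_smul]
      congr 1
      ring
    set f : ℕ → ℂ := fun j => 2 * (j : ℂ) * (n : ℂ) - 2 * (j : ℂ) ^ 2 + (n : ℂ) with hf
    set l : List ℂ := (List.range (n + 1)).map f with hl
    set P : Module.End ℂ V := ((l.map (fun a => B - a • (1 : Module.End ℂ V))).prod)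
      with hP
    have hP0 : P = 0 := by
      apply LinearMap.ext_on hspan
      rintro x ⟨k, hk, rfl⟩
      obtain ⟨hk0, hkn⟩ := hk
      rw [hP, prod_eig B l (2 * (k : ℂ) * (n : ℂ) - 2 * (k : ℂ) ^ 2 + (n : ℂ))
        (v k) (hBv k), LinearMap.zero_apply]
      have hmem : (0 : ℂ) ∈ l.map
          (fun a => (2 * (k : ℂ) * (n : ℂ) - 2 * (k : ℂ) ^ 2 + (n : ℂ)) - a) := by
        rw [hl, List.map_map]
        refine List.mem_map.mpr ⟨k.toNat, List.mem_range.mpr (by omega), ?_⟩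
        have hc : ((k.toNat : ℕ) : ℂ) = (k : ℂ) := by
          norm_cast
          omega
        simp only [Function.comp_apply, hf, hc]
        ring
      rw [List.prod_eq_zero hmem, zero_smul]
    have hPw := prod_eig B l (-2 * lam) w hBw
    rw [← hP, hP0, LinearMap.zero_apply] at hPw
    have hprod : ((l.map (fun a => -2 * lam - a)).prod) = 0 := by
      rcases smul_eq_zero.mp hPw.symm with h | h
      · exact h
      · exact absurd h hw0
    have h0mem : (0 : ℂ) ∈ l.map (fun a => -2 * lam - a) := by
      rcases List.prod_eq_zero_iff.mp hprod with h
      exact h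
    rw [hl, List.map_map] at h0mem
    obtain ⟨j, hj, hj0⟩ := List.mem_map.mp h0mem
    have hjn : j ≤ n := by
      have := List.mem_range.mp hj
      omega
    refine ⟨(j : ℤ), by positivity, by exact_mod_cast hjn, ?_⟩
    simp only [Function.comp_apply, hf] at hj0
    push_cast
    linear_combination (-(1:ℂ)/2) * hj0
end

section
/- The kernel of A⁽ⁿ⁾ = [[θ₂², −θ₂θ₁],[−θ₁θ₂, θ₁²]] acting on V⁽ⁿ⁾ ⊕ V⁽ⁿ⁾ has dimension n+1, equal to the dimension of V⁽ⁿ⁾; it is the kernel of the surjective linear map (α,β) ↦ θ₂α − θ₁β from V⁽ⁿ⁾ ⊕ V⁽ⁿ⁾ to V⁽ⁿ⁾. -/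
/-- The linear map `(α,β) ↦ θ₂α − θ₁β` from `V ⊕ V` to `V`. -/
noncomputable def PhiMap {V : Type*} [AddCommGroup V] [Module ℂ V]
    (θ1 θ2 : Module.End ℂ V) : V × V →ₗ[ℂ] V :=
  θ2.comp (LinearMap.fst ℂ V V) - θ1.comp (LinearMap.snd ℂ V V)

/-- The operator `A⁽ⁿ⁾ = [[θ₂², −θ₂θ₁],[−θ₁θ₂, θ₁²]]` on `V ⊕ V`; note
`A(α,β) = (θ₂(θ₂α−θ₁β), −θ₁(θ₂α−θ₁β))`. -/
noncomputable def Aop {V : Type*} [AddCommGroup V] [Module ℂ V]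
    (θ1 θ2 : Module.End ℂ V) : V × V →ₗ[ℂ] V × V :=
  LinearMap.prod (θ2.comp (PhiMap θ1 θ2)) ((-θ1).comp (PhiMap θ1 θ2))

/-- the kernel of `A⁽ⁿ⁾` on `V⁽ⁿ⁾ ⊕ V⁽ⁿ⁾` has dimension `n+1`
(the dimension of `V⁽ⁿ⁾`); it is the kernel of the surjective linear map
`(α,β) ↦ θ₂α − θ₁β`. -/
theorem stmt14 {V : Type*} [AddCommGroup V] [Module ℂ V]
    (n : ℕ) (hn : 1 ≤ n)
    (X Y H : Module.End ℂ V)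
    (hHX : ⁅H, X⁆ = (2 : ℂ) • X) (hHY : ⁅H, Y⁆ = (-2 : ℂ) • Y)
    (hXY : ⁅X, Y⁆ = H)
    (v : ℤ → V)
    (hv0 : ∀ k : ℤ, k < 0 ∨ (n : ℤ) < k → v k = 0)
    (hH : ∀ k : ℤ, H (v k) = ((n : ℂ) - 2 * k) • v k)
    (hX : ∀ k : ℤ, X (v k) = ((k : ℂ) * ((n : ℂ) - k + 1)) • v (k - 1))
    (hY : ∀ k : ℤ, Y (v k) = v (k + 1))
    (b : Module.Basis (Fin (n + 1)) ℂ V) (hb : ∀ i : Fin (n + 1), b i = v ((i : ℕ) : ℤ)) :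
    Function.Surjective (PhiMap (theta1 X Y) (theta2 X Y))
    ∧ LinearMap.ker (Aop (theta1 X Y) (theta2 X Y))
        = LinearMap.ker (PhiMap (theta1 X Y) (theta2 X Y))
    ∧ Module.finrank ℂ (LinearMap.ker (Aop (theta1 X Y) (theta2 X Y))) = n + 1 := by
  
  set θ1 := theta1 X Y with hθ1
  set θ2 := theta2 X Y with hθ2
  set c : ℤ → ℂ := fun k => ((-1:ℂ)/2) * (((k:ℂ)+1)*((n:ℂ)-k) + (k:ℂ)*((n:ℂ)-k+1)) with hc
  set T : Module.End ℂ V := θ2 * θ2 + θ1 * θ1 with hTdef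
  have hT : ∀ k : ℤ, T (v k) = c k • v k := by
    intro k
    simp only [hTdef, hθ1, hθ2, theta1, theta2, LinearMap.add_apply, Module.End.mul_apply,
      LinearMap.smul_apply, LinearMap.sub_apply, map_add, map_sub, map_smul,
      hX, hY, add_sub_cancel_right, sub_add_cancel, hc]
    match_scalars <;> (push_cast; ring_nf; simp only [Complex.I_sq]; ring_nf)
  have hcne : ∀ k : ℤ, 0 ≤ k → k ≤ (n:ℤ) → c k ≠ 0 := by
    intro k h0 h1
    have hn' : (1:ℤ) ≤ (n:ℤ) := by exact_mod_cast hn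
    have h2 : ((k+1)*((n:ℤ)-k) + k*((n:ℤ)-k+1)) ≠ 0 := by
      nlinarith [mul_nonneg h0 (sub_nonneg.mpr h1)]
    have hck : c k = ((-1:ℂ)/2) * ((((k+1)*((n:ℤ)-k) + k*((n:ℤ)-k+1)) : ℤ) : ℂ) := by
      simp only [hc]; push_cast; ring
    rw [hck]
    exact mul_ne_zero (by norm_num) (Int.cast_ne_zero.mpr h2)
  have hile : ∀ i : Fin (n+1), (0:ℤ) ≤ ((i:ℕ):ℤ) ∧ ((i:ℕ):ℤ) ≤ (n:ℤ) := by
    intro i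
    constructor
    · positivity
    · exact_mod_cast Nat.lt_succ_iff.mp i.isLt
  set S : Module.End ℂ V := b.constr ℂ (fun i => (c ((i:ℕ):ℤ))⁻¹ • b i) with hS
  have hST : ∀ x, S (T x) = x := by
    have heq : S ∘ₗ T = LinearMap.id := by
      apply b.ext
      intro i
      rw [LinearMap.comp_apply, hb i, hT, map_smul, ← hb i, hS, Module.Basis.constr_basis,
        smul_smul, mul_inv_cancel₀ (hcne _ (hile i).1 (hile i).2), one_smul,
        LinearMap.id_apply, hb i]
    intro x
    have := LinearMap.congr_fun heq x
    simpa using this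
  have hTS : ∀ x, T (S x) = x := by
    have heq : T ∘ₗ S = LinearMap.id := by
      apply b.ext
      intro i
      rw [LinearMap.comp_apply, hS, Module.Basis.constr_basis, map_smul, hb i, hT, ← hb i,
        smul_smul, inv_mul_cancel₀ (hcne _ (hile i).1 (hile i).2), one_smul,
        LinearMap.id_apply]
    intro x
    have := LinearMap.congr_fun heq x
    simpa using this
  have Tinj : Function.Injective T := Function.LeftInverse.injective hST
  have Tsurj : Function.Surjective T := Function.RightInverse.surjective hTS
  have hsurj : Function.Surjective (PhiMap θ1 θ2) := by
    intro u
    obtain ⟨w, hw⟩ := Tsurj u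
    refine ⟨(θ2 w, -(θ1 w)), ?_⟩
    have hw' : θ2 (θ2 w) + θ1 (θ1 w) = u := by
      rw [← hw, hTdef]; simp [LinearMap.add_apply, Module.End.mul_apply]
    simp [PhiMap, LinearMap.sub_apply, LinearMap.comp_apply, map_neg, sub_neg_eq_add, hw']
  have hker : LinearMap.ker (Aop θ1 θ2) = LinearMap.ker (PhiMap θ1 θ2) := by
    ext p
    simp only [LinearMap.mem_ker, Aop, LinearMap.prod_apply, Function.prod, LinearMap.comp_apply,
      LinearMap.neg_apply, Prod.mk_eq_zero, neg_eq_zero]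
    constructor
    · rintro ⟨h1, h2⟩
      have h0 : T (PhiMap θ1 θ2 p) = T 0 := by
        rw [map_zero, hTdef]
        simp [LinearMap.add_apply, Module.End.mul_apply, h1, h2]
      exact Tinj h0
    · intro h
      simp [h]
  have hfd : FiniteDimensional ℂ V := b.finiteDimensional_of_finite
  have hdim : Module.finrank ℂ V = n+1 := by
    rw [Module.finrank_eq_card_basis b, Fintype.card_fin]
  have hrange : LinearMap.range (PhiMap θ1 θ2) = ⊤ := LinearMap.range_eq_top.mpr hsurj
  have hrk := LinearMap.finrank_range_add_finrank_ker (PhiMap θ1 θ2)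
  rw [hrange, finrank_top] at hrk
  have hVV : Module.finrank ℂ (V × V) = (n+1) + (n+1) := by
    rw [Module.finrank_prod, hdim]
  refine ⟨hsurj, hker, ?_⟩
  rw [hker]
  omega
end
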